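/- Let w ∈ ℂ^{m+n−1} and let H_w be the m×n Hankel matrix with entries (H_w)_{ij} = w_{i+j}. Then ‖H_w‖₂ ≤ max_{0 ≤ k ≤ m+n−2} |Σ_{j=0}^{m+n−2} e^{−2πi k j/(m+n−1)} w_j|, i.e., the spectral norm of H_w is bounded by the largest modulus among the entries of the (unnormalized) discrete Fourier transform of w. -/

import Mathlib

open scoped Matrix Matrix.Norms.L2Operator

/-- Spectral (operator 2-) norm of a complex matrix: the operator norm induced by the
Euclidean norms on the domain and codomain. -/
noncomputable def specNorm {m n : Type*} [Fintype m] [Fintype n] [DecidableEq n]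
    (A : Matrix m n ℂ) : ℝ := ‖A‖

/-- The singular values (unordered, indexed by the column index type) of a complex matrix:
the square roots of the eigenvalues of the Hermitian matrix `Aᴴ * A`. -/
noncomputable def singularValues {m n : Type*} [Fintype m] [Fintype n] [DecidableEq n]
    (A : Matrix m n ℂ) : n → ℝ :=
  fun i => Real.sqrt ((Matrix.isHermitian_conjTranspose_mul_self A).eigenvalues i)

/-- The `m × n` Hankel matrix associated with a vector `w` of length `m + n - 1`:
its `(i, j)` entry is `w (i + j)`. -/
noncomputable def hankel {m n : ℕ} (w : Fin (m + n - 1) → ℂ) : Matrix (Fin m) (Fin n) ℂ :=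
  Matrix.of fun i j => w ⟨(i : ℕ) + (j : ℕ), by have h1 := i.2; have h2 := j.2; omega⟩

/-! Put `N = m + n - 1`. The matrix `C_{ij} = w_{(i + j) mod N}` on `Fin N × Fin N` has `H_w` as
its upper-left `m × n` block, so `‖H_w‖₂ ≤ ‖C‖₂`. With `F_{jk} = ζ^{jk}` for `ζ = e^{2πi/N}`,
orthogonality of the characters `k ↦ ζ^{jk}` gives `C = N⁻¹ F diag(Fᴴ w) F` and `Fᴴ F = N`, so
`‖F‖₂² = N` and `‖C‖₂ ≤ ‖Fᴴ w‖_∞`, the largest modulus of a DFT coefficient of `w`. -/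

open Finset Complex
open scoped Real

theorem geom_sum_eq_ite_of_pow_eq_one {K : Type*} [DivisionRing K] [DecidableEq K] {x : K}
    {N : ℕ} (hx : x ^ N = 1) : ∑ i ∈ range N, x ^ i = if x = 1 then (N : K) else 0 := by
  split_ifs with h
  · simp [h]
  · rw [geom_sum_eq h, hx, sub_self, zero_div]

namespace Matrix

variable {𝕜 : Type*} [RCLike 𝕜] {m n m' n' : Type*} [Fintype m] [Fintype n] [Fintype m']
  [Fintype n'] [DecidableEq n]

lemma l2_opNorm_le_one_of_conjTranspose_mul_self_eq_one {A : Matrix m n 𝕜} (h : Aᴴ * A = 1) :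
    ‖A‖ ≤ 1 := by
  have hA : ‖A‖ * ‖A‖ ≤ 1 := by
    rw [← l2_opNorm_conjTranspose_mul_self, h, cstar_norm_def, map_one]
    exact ContinuousLinearMap.norm_id_le
  nlinarith [norm_nonneg A]

lemma l2_opNorm_one_submatrix_le [DecidableEq n'] {g : n' → n} (hg : Function.Injective g) :
    ‖(1 : Matrix n n 𝕜).submatrix id g‖ ≤ 1 := by
  refine l2_opNorm_le_one_of_conjTranspose_mul_self_eq_one ?_
  rw [conjTranspose_submatrix, conjTranspose_one, ← submatrix_mul _ _ _ _ _ Function.bijective_id,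
    Matrix.one_mul, submatrix_one _ hg]

lemma l2_opNorm_submatrix_le [DecidableEq m] [DecidableEq m'] [DecidableEq n'] (A : Matrix m n 𝕜)
    {f : m' → m} {g : n' → n} (hf : Function.Injective f) (hg : Function.Injective g) :
    ‖A.submatrix f g‖ ≤ ‖A‖ := by
  have hfactor : A.submatrix f g =
      (1 : Matrix m m 𝕜).submatrix f id * A * (1 : Matrix n n 𝕜).submatrix id g := by
    ext i j
    simp [mul_apply, one_apply]
  have hf' : ‖(1 : Matrix m m 𝕜).submatrix f id‖ ≤ 1 := by
    rw [← l2_opNorm_conjTranspose, conjTranspose_submatrix, conjTranspose_one]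
    exact l2_opNorm_one_submatrix_le hf
  calc ‖A.submatrix f g‖
      ≤ ‖(1 : Matrix m m 𝕜).submatrix f id‖ * ‖A‖ * ‖(1 : Matrix n n 𝕜).submatrix id g‖ := by
        rw [hfactor]
        exact (l2_opNorm_mul _ _).trans (by gcongr; exact l2_opNorm_mul _ _)
    _ ≤ 1 * ‖A‖ * 1 := by gcongr; exact l2_opNorm_one_submatrix_le hg
    _ = ‖A‖ := by ring

end Matrix

lemma IsPrimitiveRoot.sum_pow_mul_star_pow {ζ : ℂ} {N : ℕ} (hζ : IsPrimitiveRoot ζ N)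
    (hN : N ≠ 0) (a b : ℕ) :
    ∑ k : Fin N, ζ ^ (a * k) * star (ζ ^ (b * k)) = if a % N = b % N then (N : ℂ) else 0 := by
  have hstar : ∀ c : ℕ, star (ζ ^ c) = (ζ ^ c)⁻¹ := fun c =>
    (inv_eq_conj (by rw [norm_pow, hζ.norm'_eq_one hN, one_pow])).symm
  have hroot : (ζ ^ a * (ζ ^ b)⁻¹) ^ N = 1 := by
    rw [mul_pow, inv_pow, ← pow_mul, ← pow_mul, mul_comm a, mul_comm b, pow_mul, pow_mul,
      hζ.pow_eq_one, one_pow, one_pow, inv_one, mul_one]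
  have hone : ζ ^ a * (ζ ^ b)⁻¹ = 1 ↔ a % N = b % N := by
    rw [mul_inv_eq_one₀ (pow_ne_zero _ (hζ.ne_zero hN)), (hζ.isOfFinOrder hN).pow_inj_mod,
      ← hζ.eq_orderOf]
  calc ∑ k : Fin N, ζ ^ (a * k) * star (ζ ^ (b * k))
      = ∑ k ∈ range N, (ζ ^ a * (ζ ^ b)⁻¹) ^ k := by
        rw [Fin.sum_univ_eq_sum_range (fun k : ℕ => ζ ^ (a * k) * star (ζ ^ (b * k)))]
        refine sum_congr rfl fun k _ => ?_
        rw [hstar, mul_pow, inv_pow, pow_mul, pow_mul]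
    _ = _ := by rw [geom_sum_eq_ite_of_pow_eq_one hroot]; simp only [hone]

def anticirculant {α n : Type*} [Add n] (v : n → α) : Matrix n n α :=
  Matrix.of fun i j => v (i + j)

noncomputable def dftMatrix (N : ℕ) : Matrix (Fin N) (Fin N) ℂ :=
  Matrix.of fun j k => exp (2 * π * I / N) ^ ((j : ℕ) * k)

lemma conjTranspose_dftMatrix_mulVec_apply {N : ℕ} (w : Fin N → ℂ) (k : Fin N) :
    ((dftMatrix N)ᴴ *ᵥ w) k =
      ∑ j : Fin N, exp (-2 * π * I * (k : ℕ) * (j : ℕ) / N) * w j := by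
  simp only [Matrix.mulVec, dotProduct]
  refine sum_congr rfl fun j _ => ?_
  rw [Matrix.conjTranspose_apply, dftMatrix, Matrix.of_apply, ← exp_nat_mul, star_def, ← exp_conj]
  congr 2
  simp [map_div₀, conj_ofNat]
  ring

lemma conjTranspose_dftMatrix_mul_self {N : ℕ} (hN : N ≠ 0) :
    (dftMatrix N)ᴴ * dftMatrix N = (N : ℂ) • 1 := by
  ext i j
  rw [Matrix.mul_apply]
  simp only [Matrix.conjTranspose_apply, dftMatrix, Matrix.of_apply]
  rw [sum_congr rfl fun k _ => by rw [mul_comm, mul_comm (k : ℕ) i, mul_comm (k : ℕ) j],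
    (isPrimitiveRoot_exp N hN).sum_pow_mul_star_pow hN, Nat.mod_eq_of_lt i.2,
    Nat.mod_eq_of_lt j.2]
  simp [Matrix.one_apply, Fin.ext_iff, eq_comm]

lemma l2_opNorm_dftMatrix_mul_self {N : ℕ} (hN : N ≠ 0) :
    ‖dftMatrix N‖ * ‖dftMatrix N‖ = N := by
  have : NeZero N := ⟨hN⟩
  rw [← Matrix.l2_opNorm_conjTranspose_mul_self, conjTranspose_dftMatrix_mul_self hN, norm_smul,
    CStarRing.norm_one, mul_one, norm_natCast]

lemma anticirculant_eq_smul_dftMatrix_mul {N : ℕ} (hN : N ≠ 0) (w : Fin N → ℂ) :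
    anticirculant w =
      (N : ℂ)⁻¹ • (dftMatrix N * Matrix.diagonal ((dftMatrix N)ᴴ *ᵥ w) * dftMatrix N) := by
  set ζ := exp (2 * π * I / N)
  have hζ : IsPrimitiveRoot ζ N := isPrimitiveRoot_exp N hN
  ext i j
  have horth : ∀ l : Fin N, ∑ k : Fin N, ζ ^ (((i : ℕ) + j) * k) * star (ζ ^ ((l : ℕ) * k)) =
      if i + j = l then (N : ℂ) else 0 := fun l => by
    rw [hζ.sum_pow_mul_star_pow hN, Nat.mod_eq_of_lt l.2]
    simp only [Fin.ext_iff, Fin.val_add]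
  calc anticirculant w i j
      = (N : ℂ)⁻¹ * ∑ l : Fin N, (if i + j = l then (N : ℂ) else 0) * w l := by
        simp [anticirculant, hN]
    _ = (N : ℂ)⁻¹ * ∑ l : Fin N, ∑ k : Fin N,
          ζ ^ ((i : ℕ) * k) * (star (ζ ^ ((l : ℕ) * k)) * w l) * ζ ^ ((k : ℕ) * j) := by
        simp only [← horth, sum_mul]
        congr 1
        refine sum_congr rfl fun l _ => sum_congr rfl fun k _ => ?_
        ring
    _ = _ := by
        rw [Matrix.smul_apply, Matrix.mul_apply, smul_eq_mul, sum_comm]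
        simp only [Matrix.mul_diagonal, Matrix.mulVec, dotProduct, Matrix.conjTranspose_apply,
          dftMatrix, Matrix.of_apply, mul_sum, sum_mul, ζ]

lemma l2_opNorm_anticirculant_le {N : ℕ} (hN : N ≠ 0) (w : Fin N → ℂ) :
    ‖anticirculant w‖ ≤ ‖(dftMatrix N)ᴴ *ᵥ w‖ := by
  have hNpos : (0 : ℝ) < N := by positivity
  calc ‖anticirculant w‖
      = (N : ℝ)⁻¹ * ‖dftMatrix N * Matrix.diagonal ((dftMatrix N)ᴴ *ᵥ w) * dftMatrix N‖ := by
        rw [anticirculant_eq_smul_dftMatrix_mul hN, norm_smul, norm_inv, norm_natCast]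
    _ ≤ (N : ℝ)⁻¹ * (‖dftMatrix N‖ * ‖(dftMatrix N)ᴴ *ᵥ w‖ * ‖dftMatrix N‖) := by
        gcongr
        refine (Matrix.l2_opNorm_mul _ _).trans ?_
        rw [← Matrix.l2_opNorm_diagonal]
        gcongr
        exact Matrix.l2_opNorm_mul _ _
    _ = ‖(dftMatrix N)ᴴ *ᵥ w‖ := by
        rw [mul_right_comm _ _ ‖dftMatrix N‖, l2_opNorm_dftMatrix_mul_self hN]
        field_simp

lemma hankel_eq_submatrix_anticirculant {m n : ℕ} (w : Fin (m + n - 1) → ℂ)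
    (hm : m ≤ m + n - 1) (hn : n ≤ m + n - 1) :
    hankel w = (anticirculant w).submatrix (Fin.castLE hm) (Fin.castLE hn) := by
  ext i j
  simp only [hankel, anticirculant, Matrix.submatrix_apply, Matrix.of_apply]
  congr 1
  rw [Fin.ext_iff, Fin.val_add, Fin.val_castLE, Fin.val_castLE, Nat.mod_eq_of_lt (by omega)]

theorem hankel_norm_le_max_dft_general (m n : ℕ) (w : Fin (m + n - 1) → ℂ) :
    specNorm (hankel w) ≤
      ⨆ k : Fin (m + n - 1), ‖(∑ j : Fin (m + n - 1),
        Complex.exp (-2 * (Real.pi : ℂ) * Complex.I * ((k : ℕ) : ℂ) * ((j : ℕ) : ℂ) /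
          ((m + n - 1 : ℕ) : ℂ)) * w j)‖ := by
  simp only [← conjTranspose_dftMatrix_mulVec_apply]
  set v := (dftMatrix (m + n - 1))ᴴ *ᵥ w
  have hmax_nonneg : 0 ≤ ⨆ k, ‖v k‖ := Real.iSup_nonneg fun k => norm_nonneg (v k)
  rcases Nat.eq_zero_or_pos m with rfl | hm
  · simpa [specNorm, Subsingleton.elim (hankel w) 0] using hmax_nonneg
  rcases Nat.eq_zero_or_pos n with rfl | hn
  · simpa [specNorm, Subsingleton.elim (hankel w) 0] using hmax_nonneg
  calc specNorm (hankel w)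
      ≤ ‖anticirculant w‖ := by
        rw [specNorm, hankel_eq_submatrix_anticirculant w (by omega) (by omega)]
        exact Matrix.l2_opNorm_submatrix_le _ (Fin.castLE_injective _) (Fin.castLE_injective _)
    _ ≤ ‖v‖ := l2_opNorm_anticirculant_le (by omega) w
    _ ≤ ⨆ k, ‖v k‖ :=
        (pi_norm_le_iff_of_nonneg hmax_nonneg).2 fun k =>
          le_ciSup (f := fun k => ‖v k‖) (Finite.bddAbove_range _) k

/-- Let `w ∈ ℂ^{m+n-1}` and let `H_w` be the `m × n` Hankel matrix with
entries `(H_w)_{ij} = w_{i+j}`.  Then `‖H_w‖₂` is bounded by the largest modulus among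
the entries of the (unnormalized) discrete Fourier transform of `w`:
`‖H_w‖₂ ≤ max_k |Σ_j e^{−2πi k j/(m+n−1)} w_j|`. -/
theorem hankel_norm_le_max_dft (m n : ℕ) (hm : 0 < m) (hn : 0 < n)
    (w : Fin (m + n - 1) → ℂ) :
    specNorm (hankel w) ≤
      ⨆ k : Fin (m + n - 1), ‖(∑ j : Fin (m + n - 1),
        Complex.exp (-2 * (Real.pi : ℂ) * Complex.I * ((k : ℕ) : ℂ) * ((j : ℕ) : ℂ) /
          ((m + n - 1 : ℕ) : ℂ)) * w j)‖ :=
  hankel_norm_le_max_dft_general m n w
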